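/- The orthogonal complement span_ℝ(I₀)^⊥ is the union of the regions w·C_I over all I ⊆ Δ and all w ∈ W with w^{-1} ∈ C_{I₀}(I); that is, span_ℝ(I₀)^⊥ = ⋃_{I ⊆ Δ} ⋃_{w ∈ W, w^{-1}·α ∈ ⟨I⟩ for all α ∈ I₀} w·C_I. In particular every vector of span_ℝ(I₀)^⊥ lies in some region w·C_I with w^{-1}·I₀ ⊆ ⟨I⟩, and every such region is contained in span_ℝ(I₀)^⊥. -/

import Mathlib

/-- The open region `C_I` of the Coxeter complex attached to a subset `I` of the
simple system `Δ`:  `C_I = {v : ⟨v,α⟩ = 0 ∀ α ∈ I, ⟨v,α⟩ > 0 ∀ α ∈ Δ∖I}`. -/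
def stmtCI {V : Type} [NormedAddCommGroup V] [InnerProductSpace ℝ V]
    (Δ I : Finset V) : Set V :=
  {v : V | (∀ α ∈ I, (inner ℝ v α : ℝ) = 0) ∧ ∀ α ∈ Δ, α ∉ I → 0 < (inner ℝ v α : ℝ)}

private lemma aux_mem_orth_span {V : Type} [NormedAddCommGroup V] [InnerProductSpace ℝ V]
    (s : Set V) (v : V) (h : ∀ x ∈ s, (inner ℝ x v : ℝ) = 0) :
    v ∈ (Submodule.span ℝ s)ᗮ := by
  rw [Submodule.mem_orthogonal]
  intro y hy
  induction hy using Submodule.span_induction with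
  | mem x hx => exact h x hx
  | zero => simp
  | add x y _ _ hx hy => simp [inner_add_left, hx, hy]
  | smul c x _ hx => simp [inner_smul_left, hx]

/-- for a finite root system `Φ` spanning a real inner ℝ product space `V`,
with reflections `sα`, reflection group `W = ⟨sα : α ∈ Φ⟩`, simple system `Δ` and a fixed
`I₀ ⊆ Δ`: the orthogonal complement `span(I₀)^⊥` is the union of the regions `w·C_I`
over all `I ⊆ Δ` and all `w ∈ W` with `w⁻¹·α ∈ span(I)` for all `α ∈ I₀`. -/
theorem stmt_13 {V : Type} [NormedAddCommGroup V] [InnerProductSpace ℝ V]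
    [FiniteDimensional ℝ V]
    (Φ : Finset V) (hΦ0 : (0 : V) ∉ Φ)
    (hΦspan : Submodule.span ℝ (Φ : Set V) = ⊤)
    (sα : V → (V ≃ₗᵢ[ℝ] V))
    (hrefl : ∀ α ∈ Φ, ∀ v : V, sα α v = v - (2 * (inner ℝ v α : ℝ) / (inner ℝ α α : ℝ)) • α)
    (hstab : ∀ α ∈ Φ, (fun v => sα α v) '' (Φ : Set V) = (Φ : Set V))
    (Δ : Finset V) (hΔΦ : Δ ⊆ Φ)
    (hΔli : LinearIndependent ℝ (fun x : (Δ : Set V) => (x : V)))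
    (hΔsp : Submodule.span ℝ (Δ : Set V) = ⊤)
    (hsimp : ∀ β ∈ Φ, (∃ c : V → ℝ, (∀ α ∈ Δ, 0 ≤ c α) ∧ β = ∑ α ∈ Δ, c α • α) ∨
        (∃ c : V → ℝ, (∀ α ∈ Δ, c α ≤ 0) ∧ β = ∑ α ∈ Δ, c α • α))
    (I₀ : Finset V) (hI₀ : I₀ ⊆ Δ) :
    ((Submodule.span ℝ (I₀ : Set V))ᗮ : Set V) =
      ⋃ (I : Finset V) (_ : I ⊆ Δ)
        (w : V ≃ₗᵢ[ℝ] V)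
        (_ : w ∈ Subgroup.closure ((fun α => sα α) '' (Φ : Set V)) ∧
              ∀ α ∈ I₀, w⁻¹ α ∈ Submodule.span ℝ (I : Set V)),
        (fun v => w v) '' stmtCI Δ I := by
  classical
  set G := Subgroup.closure ((fun α => sα α) '' (Φ : Set V)) with hGdef
  -- every element of G stabilizes Φ
  have hGstab : ∀ g ∈ G, (fun v => g v) '' (Φ : Set V) = (Φ : Set V) := by
    intro g hg
    induction hg using Subgroup.closure_induction with
    | mem x hx => obtain ⟨α, hα, rfl⟩ := hx; exact hstab α hα
    | one => simp
    | mul x y hx hy ihx ihy =>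
        have : (fun v => (x * y) v) = (fun v => x v) ∘ (fun v => y v) := by
          funext v; simp [LinearIsometryEquiv.coe_mul]
        rw [this, Set.image_comp, ihy, ihx]
    | inv x hx ih =>
        have h2 : (fun v => x⁻¹ v) '' ((fun v => x v) '' (Φ : Set V)) = (Φ : Set V) := by
          rw [← Set.image_comp]
          have : ((fun v => x⁻¹ v) ∘ fun v => x v) = id := by
            funext v; simp [LinearIsometryEquiv.coe_inv]
          rw [this, Set.image_id]
        rw [ih] at h2; exact h2
  have hGmem : ∀ g ∈ G, ∀ α ∈ Φ, g α ∈ Φ := by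
    intro g hg α hα
    have := hGstab g hg
    have : g α ∈ (fun v => g v) '' (Φ : Set V) := ⟨α, hα, rfl⟩
    rwa [hGstab g hg] at this
  -- G is a finite set
  have hGfin : ((G : Set (V ≃ₗᵢ[ℝ] V))).Finite := by
    have hinj : Set.InjOn (fun g : V ≃ₗᵢ[ℝ] V => fun δ : (Δ : Set V) => g δ)
        (G : Set (V ≃ₗᵢ[ℝ] V)) := by
      intro g₁ _ g₂ _ h
      have hlm : (g₁ : V →ₗ[ℝ] V) = (g₂ : V →ₗ[ℝ] V) := by
        apply LinearMap.ext_on hΔsp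
        intro x hx
        exact congrFun h ⟨x, hx⟩
      exact LinearIsometryEquiv.ext fun v => LinearMap.congr_fun hlm v
    have himg : ((fun g : V ≃ₗᵢ[ℝ] V => fun δ : (Δ : Set V) => g δ) ''
        (G : Set (V ≃ₗᵢ[ℝ] V))).Finite := by
      apply Set.Finite.subset (Set.Finite.pi (fun _ : (Δ : Set V) => Φ.finite_toSet))
      rintro f ⟨g, hg, rfl⟩
      intro δ _
      exact hGmem g hg δ (hΔΦ δ.2)
    exact Set.Finite.of_finite_image himg hinj
  -- a vector d with positive inner ℝ products against all of Δ
  have hΔne : ∀ α ∈ Δ, α ≠ 0 := fun α hα h0 => hΦ0 (h0 ▸ hΔΦ hα)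
  obtain ⟨d, hd⟩ : ∃ d : V, ∀ α ∈ Δ, (0 : ℝ) < inner ℝ d α := by
    let b : Module.Basis (Δ : Set V) ℝ V := Module.Basis.mk hΔli (by rw [Subtype.range_coe]; exact hΔsp.ge)
    let φ : V →L[ℝ] ℝ := LinearMap.toContinuousLinearMap b.sumCoords
    refine ⟨(InnerProductSpace.toDual ℝ V).symm φ, fun α hα => ?_⟩
    have h1 : (inner ℝ ((InnerProductSpace.toDual ℝ V).symm φ) α : ℝ) = φ α :=
      InnerProductSpace.toDual_symm_apply
    have h2 : φ α = b.sumCoords α := rfl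
    have h3 : b ⟨α, hα⟩ = α := by simp [b]
    rw [h1, h2, ← h3, Module.Basis.sumCoords_self_apply]
    norm_num
  ext v
  simp only [Set.mem_iUnion, SetLike.mem_coe]
  constructor
  · intro hv
    have hv' : ∀ α ∈ I₀, (inner ℝ v α : ℝ) = 0 := fun α hα =>
      (Submodule.mem_orthogonal' _ v).1 hv α (Submodule.subset_span hα)
    -- take the element of the orbit of v maximizing the inner ℝ product with d
    have hOfin : ((fun g : V ≃ₗᵢ[ℝ] V => g v) '' (G : Set (V ≃ₗᵢ[ℝ] V))).Finite :=
      hGfin.image _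
    have hOne : ((fun g : V ≃ₗᵢ[ℝ] V => g v) '' (G : Set (V ≃ₗᵢ[ℝ] V))).Nonempty :=
      ⟨v, 1, G.one_mem, by simp⟩
    obtain ⟨u, ⟨g, hgG, rfl⟩, hmax⟩ :=
      Set.exists_max_image _ (fun u : V => (inner ℝ u d : ℝ)) hOfin hOne
    -- g v lies in the closed fundamental chamber
    have hpos : ∀ α ∈ Δ, (0:ℝ) ≤ inner ℝ (g v) α := by
      intro α hα
      have hαΦ : α ∈ Φ := hΔΦ hα
      have hsmem : sα α ∈ G := Subgroup.subset_closure ⟨α, hαΦ, rfl⟩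
      have hle : (inner ℝ ((sα α * g) v) d : ℝ) ≤ inner ℝ (g v) d :=
        hmax _ ⟨_, G.mul_mem hsmem hgG, rfl⟩
      have heq : (sα α * g) v = g v - (2 * (inner ℝ (g v) α : ℝ) / (inner ℝ α α : ℝ)) • α := by
        have : (sα α * g) v = sα α (g v) := by rw [LinearIsometryEquiv.coe_mul]; rfl
        rw [this]; exact hrefl α hαΦ (g v)
      rw [heq, inner_sub_left, real_inner_smul_left] at hle
      have hαd : (0:ℝ) < inner ℝ α d := by rw [real_inner_comm]; exact hd α hα
      have hαα : (0:ℝ) < inner ℝ α α :=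
        lt_of_le_of_ne real_inner_self_nonneg
          (fun h => (hΔne α hα) ((@inner_self_eq_zero ℝ _ _ _ _ α).1 h.symm))
      have h4 : (0:ℝ) ≤ (2 * (inner ℝ (g v) α : ℝ) / (inner ℝ α α : ℝ)) * (inner ℝ α d : ℝ) := by
        linarith
      have h5 : (0:ℝ) ≤ 2 * (inner ℝ (g v) α : ℝ) / (inner ℝ α α : ℝ) :=
        (mul_nonneg_iff_of_pos_right hαd).1 h4
      have h6 : (2 * (inner ℝ (g v) α : ℝ) / (inner ℝ α α : ℝ)) * (inner ℝ α α : ℝ)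
          = 2 * (inner ℝ (g v) α : ℝ) := div_mul_cancel₀ _ hαα.ne'
      nlinarith [mul_nonneg h5 hαα.le]
    set I : Finset V := Δ.filter (fun α => (inner ℝ (g v) α : ℝ) = 0) with hIdef
    have hIΔ : I ⊆ Δ := Finset.filter_subset _ _
    have hu : g v ∈ stmtCI Δ I := by
      constructor
      · intro α hα; exact (Finset.mem_filter.1 hα).2
      · intro α hα hαI
        rcases (hpos α hα).lt_or_eq with h | h
        · exact h
        · exact absurd (Finset.mem_filter.2 ⟨hα, h.symm⟩) hαI
    refine ⟨I, hIΔ, g⁻¹, ⟨G.inv_mem hgG, ?_⟩, g v, hu, ?_⟩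
    · intro α hα
      rw [inv_inv]
      have hαΦ : α ∈ Φ := hΔΦ (hI₀ hα)
      have hβΦ : g α ∈ Φ := hGmem g hgG α hαΦ
      have hinner0 : (inner ℝ (g v) (g α) : ℝ) = 0 := by
        rw [LinearIsometryEquiv.inner_map_map]; exact hv' α hα
      have key : ∀ c : V → ℝ, g α = ∑ γ ∈ Δ, c γ • γ →
          (∀ γ ∈ Δ, c γ * (inner ℝ (g v) γ : ℝ) = 0) →
          g α ∈ Submodule.span ℝ (I : Set V) := by
        intro c hβ hzero
        have hβI : g α = ∑ γ ∈ I, c γ • γ := by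
          rw [hβ]
          symm
          apply Finset.sum_subset hIΔ
          intro γ hγΔ hγI
          have hne : (inner ℝ (g v) γ : ℝ) ≠ 0 := fun h0 =>
            hγI (Finset.mem_filter.2 ⟨hγΔ, h0⟩)
          have hc0 : c γ = 0 := by
            rcases mul_eq_zero.1 (hzero γ hγΔ) with h | h
            · exact h
            · exact absurd h hne
          simp [hc0]
        rw [hβI]
        exact Submodule.sum_mem _ fun γ hγ => Submodule.smul_mem _ _
          (Submodule.subset_span hγ)
      rcases hsimp (g α) hβΦ with ⟨c, hc, hβ⟩ | ⟨c, hc, hβ⟩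
      · refine key c hβ ?_
        have hsum : ∑ γ ∈ Δ, c γ * (inner ℝ (g v) γ : ℝ) = 0 := by
          rw [← hinner0]
          conv_rhs => rw [hβ]
          rw [inner_sum]
          exact Finset.sum_congr rfl fun γ _ => (real_inner_smul_right _ _ _).symm
        exact (Finset.sum_eq_zero_iff_of_nonneg
          (fun γ hγ => mul_nonneg (hc γ hγ) (hpos γ hγ))).1 hsum
      · refine key c hβ ?_
        have hsum : ∑ γ ∈ Δ, c γ * (inner ℝ (g v) γ : ℝ) = 0 := by
          rw [← hinner0]
          conv_rhs => rw [hβ]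
          rw [inner_sum]
          exact Finset.sum_congr rfl fun γ _ => (real_inner_smul_right _ _ _).symm
        exact (Finset.sum_eq_zero_iff_of_nonpos
          (fun γ hγ => mul_nonpos_of_nonpos_of_nonneg (hc γ hγ) (hpos γ hγ))).1 hsum
    · show g⁻¹ (g v) = v
      simp [LinearIsometryEquiv.coe_inv]
  · rintro ⟨I, hIΔ, w, ⟨hwG, hw⟩, u, hu, rfl⟩
    apply aux_mem_orth_span
    intro α hα
    have hα' : α ∈ I₀ := hα
    have hwa : w (w⁻¹ α) = α := by simp [LinearIsometryEquiv.coe_inv]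
    have h1 : (inner ℝ α (w u) : ℝ) = inner ℝ (w⁻¹ α) u := by
      conv_lhs => rw [← hwa]
      rw [LinearIsometryEquiv.inner_map_map]
    rw [h1]
    have h2 : u ∈ (Submodule.span ℝ (I : Set V))ᗮ := by
      apply aux_mem_orth_span
      intro x hx
      rw [real_inner_comm]; exact hu.1 x hx
    exact (Submodule.mem_orthogonal _ _).1 h2 _ (hw α hα')
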